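/- arXiv:2503.17861 — 2 statements merged into one kernel-verified Lean document; each statement's English description precedes it below -/
import Mathlib

section
/- Let J be a Jordan curve in K². (i) If J contains only pure points, then Γ⁻¹(J) is a closed 4-curve in ℤ². (ii) If Γ*(Γ⁻¹(J)) = J, then Γ⁻¹(J) is a closed 8-curve in ℤ². -/
open TopologicalSpace

/-- Basic (minimal) neighborhoods generating the Khalimsky topology on ℤ. -/
def khN (n : ℤ) : Set ℤ := if Odd n then {n} else {n - 1, n, n + 1}

/-- The Khalimsky (digital) topology on the integers. -/
def khLine : TopologicalSpace ℤ := generateFrom (Set.range khN)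

/-- The Khalimsky topology on the digital plane ℤ × ℤ (product topology). -/
def khPlane : TopologicalSpace (ℤ × ℤ) :=
  @instTopologicalSpaceProd ℤ ℤ khLine khLine

/-- A point of the digital plane is pure if both coordinates have the same parity. -/
def IsPure (p : ℤ × ℤ) : Prop := p.1 % 2 = p.2 % 2

/-- A point of the digital plane is mixed if it is not pure. -/
def IsMixed (p : ℤ × ℤ) : Prop := ¬ IsPure p

/-- A closed (pure) point: both coordinates even. -/
def IsClosedPt (p : ℤ × ℤ) : Prop := Even p.1 ∧ Even p.2

/-- An open (pure) point: both coordinates odd. -/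
def IsOpenPt (p : ℤ × ℤ) : Prop := Odd p.1 ∧ Odd p.2

/-- The minimal open neighborhood N(x) of a point in the digital plane. -/
def minN (x : ℤ × ℤ) : Set (ℤ × ℤ) := ⋂₀ {U : Set (ℤ × ℤ) | khPlane.IsOpen U ∧ x ∈ U}

/-- The closure cl(x) of a singleton in the digital plane. -/
def clPt (x : ℤ × ℤ) : Set (ℤ × ℤ) := @closure (ℤ × ℤ) khPlane {x}

/-- The adjacency set A(x) of a point of the digital plane. -/
def AdjSet (x : ℤ × ℤ) : Set (ℤ × ℤ) :=
  {y | y ≠ x ∧ @IsConnected (ℤ × ℤ) khPlane {x, y}}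

/-- An arc: a subset of the digital plane homeomorphic (in the subspace topology)
to a finite interval of the Khalimsky line. -/
def IsArc (C : Set (ℤ × ℤ)) : Prop :=
  ∃ a b : ℤ,
    Nonempty (@Homeomorph (↥C) (↥(Set.Icc a b))
      (TopologicalSpace.induced Subtype.val khPlane)
      (TopologicalSpace.induced Subtype.val khLine))

/-- z is an endpoint of the arc C: it has exactly one adjacent point within C. -/
def IsEndpointOf (z : ℤ × ℤ) (C : Set (ℤ × ℤ)) : Prop :=
  z ∈ C ∧ (AdjSet z ∩ C).encard = 1

/-- A Jordan curve in the digital plane. -/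
def IsJordanCurve (J : Set (ℤ × ℤ)) : Prop :=
  @IsConnected (ℤ × ℤ) khPlane J ∧ 4 ≤ J.encard ∧ ∀ x ∈ J, IsArc (J \ {x})

/-- The slant embedding Γ(x,y) = (x+y, y−x) of the Rosenfeld plane into the digital plane. -/
def Γmap (p : ℤ × ℤ) : ℤ × ℤ := (p.1 + p.2, p.2 - p.1)

/-- The operator Γ* turning subsets of ℤ² into subsets of the digital plane. -/
def ΓStar (A : Set (ℤ × ℤ)) : Set (ℤ × ℤ) :=
  Γmap '' A ∪
    {x | IsMixed x ∧ (minN x ⊆ Γmap '' A ∪ {x} ∨ clPt x ⊆ Γmap '' A ∪ {x})}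

/-- 8-adjacency in ℤ². -/
def Adj8 (p q : ℤ × ℤ) : Prop := p ≠ q ∧ |p.1 - q.1| ≤ 1 ∧ |p.2 - q.2| ≤ 1

/-- 4-adjacency in ℤ². -/
def Adj4 (p q : ℤ × ℤ) : Prop := p ≠ q ∧ |p.1 - q.1| + |p.2 - q.2| = 1

/-- The 8-neighbours of x within C. -/
def nbrs8 (C : Set (ℤ × ℤ)) (x : ℤ × ℤ) : Set (ℤ × ℤ) := {y ∈ C | Adj8 x y}

/-- The 4-neighbours of x within C. -/
def nbrs4 (C : Set (ℤ × ℤ)) (x : ℤ × ℤ) : Set (ℤ × ℤ) := {y ∈ C | Adj4 x y}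

/-- x is an 8-endpoint of C. -/
def Is8Endpoint (C : Set (ℤ × ℤ)) (x : ℤ × ℤ) : Prop :=
  x ∈ C ∧ (nbrs8 C x).encard = 1

/-- x is a 4-endpoint of C. -/
def Is4Endpoint (C : Set (ℤ × ℤ)) (x : ℤ × ℤ) : Prop :=
  x ∈ C ∧ (nbrs4 C x).encard = 1

/-- An 8-path: a finite set with exactly two 8-endpoints, every other point
having exactly two 8-adjacent points in the set. -/
def Is8Path (C : Set (ℤ × ℤ)) : Prop :=
  C.Finite ∧ {x | Is8Endpoint C x}.encard = 2 ∧
    ∀ x ∈ C, ¬ Is8Endpoint C x → (nbrs8 C x).encard = 2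

/-- A 4-path. -/
def Is4Path (C : Set (ℤ × ℤ)) : Prop :=
  C.Finite ∧ {x | Is4Endpoint C x}.encard = 2 ∧
    ∀ x ∈ C, ¬ Is4Endpoint C x → (nbrs4 C x).encard = 2

/-- A closed 8-curve: every point has exactly two 8-adjacent points in the set. -/
def Is8ClosedCurve (C : Set (ℤ × ℤ)) : Prop :=
  C.Finite ∧ ∀ x ∈ C, (nbrs8 C x).encard = 2

/-- A closed 4-curve. -/
def Is4ClosedCurve (C : Set (ℤ × ℤ)) : Prop :=
  C.Finite ∧ ∀ x ∈ C, (nbrs4 C x).encard = 2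

/-- 8-connectedness: there is no partition into two nonempty pieces that are
not 8-adjacent to each other. -/
def Conn8 (S : Set (ℤ × ℤ)) : Prop :=
  ¬ ∃ A B : Set (ℤ × ℤ), A.Nonempty ∧ B.Nonempty ∧ A ∪ B = S ∧ A ∩ B = ∅ ∧
      ∀ a ∈ A, ∀ b ∈ B, ¬ Adj8 a b

/-- 4-connectedness. -/
def Conn4 (S : Set (ℤ × ℤ)) : Prop :=
  ¬ ∃ A B : Set (ℤ × ℤ), A.Nonempty ∧ B.Nonempty ∧ A ∪ B = S ∧ A ∩ B = ∅ ∧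
      ∀ a ∈ A, ∀ b ∈ B, ¬ Adj4 a b

/-- T is a 4-component of S: a maximal 4-connected subset of S. -/
def Is4CompOf (T S : Set (ℤ × ℤ)) : Prop :=
  T ⊆ S ∧ Conn4 T ∧ ∀ T' : Set (ℤ × ℤ), T ⊆ T' → T' ⊆ S → Conn4 T' → T' = T

/-- U is a connected component of S in the digital plane. -/
def IsCompOf (U S : Set (ℤ × ℤ)) : Prop :=
  ∃ x ∈ S, @connectedComponentIn (ℤ × ℤ) khPlane S x = U

/-- The set S_J of mixed points of Γ*(Γ⁻¹(J)) having exactly three adjacent points in J. -/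
def SJ (J : Set (ℤ × ℤ)) : Set (ℤ × ℤ) :=
  {m | m ∈ ΓStar (Γmap ⁻¹' J) ∧ IsMixed m ∧ (AdjSet m ∩ J).encard = 3}

/-!
In `K²` two points are adjacent exactly when one specializes to the other, and a homeomorphism
with an interval `[a, b]` of `K` carries this adjacency to `|k - l| = 1`; so the degrees of the
points of an arc sum to twice its size minus two. Applied to the arcs `J \ {x}` of a Jordan curve
this gives `∑ deg = 2 deg x + 2 (|J| - 2)` for every `x ∈ J`, hence all degrees are equal, and
then `|J| deg = 2 deg + 2 (|J| - 2)` forces every point of `J` to have exactly two neighbours.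

`Γ` maps the 4-neighbours of `p` onto the pure neighbours of `Γ p`, and the diagonal neighbours
`q` of `p` to the mixed points `midPt (Γ p) (Γ q)` next to `Γ p`. If `Γ*(Γ⁻¹ J) = J`, a mixed
point lies in `J` iff a pair of opposite neighbours of it does; as `Γ p` has only two
neighbours in `J`, a mixed neighbour `y` of `Γ p` then lies in `J` iff the reflection of `Γ p`
in `y` does. So the 8-neighbours of `p` correspond to all the neighbours of `Γ p` in `J`.
-/

open Topology

theorem isPreconnected_pair_iff {X : Type*} [TopologicalSpace X] {x y : X} :
    IsPreconnected ({x, y} : Set X) ↔ x ⤳ y ∨ y ⤳ x := by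
  refine ⟨fun h => ?_, ?_⟩
  · by_contra! hxy
    obtain ⟨s, hs, hys, hxs⟩ : ∃ s, IsOpen s ∧ y ∈ s ∧ x ∉ s := by
      simpa [specializes_iff_forall_open] using hxy.1
    obtain ⟨t, ht, hxt, hyt⟩ : ∃ t, IsOpen t ∧ x ∈ t ∧ y ∉ t := by
      simpa [specializes_iff_forall_open] using hxy.2
    obtain ⟨z, hz, hzt, hzs⟩ := h t s ht hs (by rintro _ (rfl | rfl) <;> simp [*])
      ⟨x, by simp, hxt⟩ ⟨y, by simp, hys⟩
    rcases hz with rfl | rfl <;> contradiction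
  · have key : ∀ {a b : X}, a ⤳ b → IsPreconnected ({a, b} : Set X) := fun hab =>
      isPreconnected_singleton.subset_closure (by simp)
        (Set.insert_subset (subset_closure rfl) (by simpa [specializes_iff_mem_closure] using hab))
    rintro (h | h)
    · exact key h
    · exact Set.pair_comm x y ▸ key h

theorem isConnected_pair_iff {X : Type*} [TopologicalSpace X] {x y : X} :
    IsConnected ({x, y} : Set X) ↔ x ⤳ y ∨ y ⤳ x := by
  simp [IsConnected, isPreconnected_pair_iff]

lemma mem_khN_iff {m n : ℤ} :
    m ∈ khN n ↔ m = n ∨ (n % 2 = 0 ∧ (m = n - 1 ∨ m = n + 1)) := by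
  unfold khN
  split_ifs with h <;> simp only [Set.mem_insert_iff, Set.mem_singleton_iff] <;>
    simp only [Int.odd_iff] at h <;> omega

lemma khN_subset_of_mem {m n : ℤ} (h : m ∈ khN n) : khN m ⊆ khN n := by
  intro k hk
  rw [mem_khN_iff] at *
  omega

lemma khN_subset_of_isOpen {U : Set ℤ} (hU : khLine.IsOpen U) {n : ℤ} (hn : n ∈ U) :
    khN n ⊆ U := by
  induction hU with
  | basic s hs => obtain ⟨k, rfl⟩ := hs; exact khN_subset_of_mem hn
  | univ => exact Set.subset_univ _
  | inter s t _ _ ihs iht => exact Set.subset_inter (ihs hn.1) (iht hn.2)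
  | sUnion S _ ih =>
    obtain ⟨s, hs, hns⟩ := hn
    exact (ih s hs hns).trans (Set.subset_sUnion_of_mem hs)

lemma khLine_specializes_iff {m n : ℤ} : @Specializes ℤ khLine m n ↔ m ∈ khN n := by
  let := khLine
  rw [specializes_iff_forall_open]
  exact ⟨fun h => h _ (.basic _ ⟨n, rfl⟩) (mem_khN_iff.2 (.inl rfl)),
    fun h U hU hn => khN_subset_of_isOpen hU hn h⟩

lemma khLine_specializes_or_iff {m n : ℤ} :
    (@Specializes ℤ khLine m n ∨ @Specializes ℤ khLine n m) ↔ |m - n| ≤ 1 := by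
  simp only [khLine_specializes_iff, mem_khN_iff, abs_le]
  omega

lemma khPlane_specializes_iff {x y : ℤ × ℤ} :
    @Specializes _ khPlane x y ↔ x.1 ∈ khN y.1 ∧ x.2 ∈ khN y.2 := by
  let := khLine
  exact specializes_prod.trans (and_congr khLine_specializes_iff khLine_specializes_iff)

lemma mem_minN_iff {x y : ℤ × ℤ} : y ∈ minN x ↔ y.1 ∈ khN x.1 ∧ y.2 ∈ khN x.2 := by
  let := khPlane
  rw [← khPlane_specializes_iff, specializes_iff_forall_open]
  simp only [minN, Set.mem_sInter, Set.mem_ofPred_eq, and_imp]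
  rfl

lemma mem_clPt_iff {x y : ℤ × ℤ} : y ∈ clPt x ↔ x.1 ∈ khN y.1 ∧ x.2 ∈ khN y.2 := by
  let := khPlane
  rw [← khPlane_specializes_iff, specializes_iff_mem_closure]
  rfl

lemma IsMixed.minN_clPt {m : ℤ × ℤ} (hm : IsMixed m) :
    (minN m = {(m.1 - 1, m.2), m, (m.1 + 1, m.2)} ∧
        clPt m = {(m.1, m.2 - 1), m, (m.1, m.2 + 1)}) ∨
      (minN m = {(m.1, m.2 - 1), m, (m.1, m.2 + 1)} ∧
        clPt m = {(m.1 - 1, m.2), m, (m.1 + 1, m.2)}) := by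
  obtain ⟨m1, m2⟩ := m
  unfold IsMixed IsPure at hm
  simp only [Set.ext_iff, mem_minN_iff, mem_clPt_iff, mem_khN_iff, Set.mem_insert_iff,
    Set.mem_singleton_iff, Prod.forall, Prod.mk.injEq] at hm ⊢
  by_cases h : m1 % 2 = 0
  · left; constructor <;> intro a b <;> omega
  · right; constructor <;> intro a b <;> omega

lemma mem_AdjSet_iff {x y : ℤ × ℤ} :
    y ∈ AdjSet x ↔ y ≠ x ∧ (@Specializes _ khPlane x y ∨ @Specializes _ khPlane y x) := by
  let := khPlane
  simp only [AdjSet, Set.mem_ofPred_eq, isConnected_pair_iff]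

lemma mem_AdjSet_comm {x y : ℤ × ℤ} : y ∈ AdjSet x ↔ x ∈ AdjSet y := by
  simp only [mem_AdjSet_iff, ne_comm, or_comm]

lemma notMem_AdjSet_self (x : ℤ × ℤ) : x ∉ AdjSet x := fun h => h.1 rfl

lemma IsPure.mem_AdjSet_iff {x y : ℤ × ℤ} (hx : IsPure x) :
    y ∈ AdjSet x ↔ y ≠ x ∧ |y.1 - x.1| ≤ 1 ∧ |y.2 - x.2| ≤ 1 := by
  unfold IsPure at hx
  simp only [_root_.mem_AdjSet_iff, khPlane_specializes_iff, mem_khN_iff, abs_le, ne_eq,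
    Prod.ext_iff]
  omega

lemma IsMixed.mem_AdjSet_iff {x y : ℤ × ℤ} (hx : IsMixed x) :
    y ∈ AdjSet x ↔ |y.1 - x.1| + |y.2 - x.2| = 1 := by
  unfold IsMixed IsPure at hx
  simp only [_root_.mem_AdjSet_iff, khPlane_specializes_iff, mem_khN_iff, Int.abs_eq_natAbs,
    ne_eq, Prod.ext_iff]
  omega

lemma IsMixed.AdjSet_eq {m : ℤ × ℤ} (hm : IsMixed m) :
    AdjSet m = {(m.1 - 1, m.2), (m.1 + 1, m.2), (m.1, m.2 - 1), (m.1, m.2 + 1)} := by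
  ext c
  simp only [hm.mem_AdjSet_iff, Set.mem_insert_iff, Set.mem_singleton_iff, Prod.ext_iff,
    Int.abs_eq_natAbs]
  omega

lemma card_filter_abs_sub_eq_one {a b k : ℤ} (hk : k ∈ Finset.Icc a b) :
    ((Finset.Icc a b).filter (fun j => |j - k| = 1)).card
      = (if a < k then 1 else 0) + (if k < b then 1 else 0) := by
  rw [Finset.mem_Icc] at hk
  have : (Finset.Icc a b).filter (fun j => |j - k| = 1)
      = (Finset.Icc (max a (k - 1)) (min b (k + 1))).erase k := by
    ext j
    simp only [Finset.mem_filter, Finset.mem_Icc, Finset.mem_erase, Int.abs_eq_natAbs]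
    omega
  rw [this, Finset.card_erase_of_mem (by simp only [Finset.mem_Icc]; omega), Int.card_Icc]
  split_ifs <;> omega

lemma sum_card_filter_abs_sub_eq_one (a b : ℤ) :
    ∑ k ∈ Finset.Icc a b, ((Finset.Icc a b).filter (fun j => |j - k| = 1)).card
      = 2 * (b - a).toNat := by
  rw [Finset.sum_congr rfl fun k hk => card_filter_abs_sub_eq_one hk, Finset.sum_add_distrib,
    Finset.sum_boole, Finset.sum_boole]
  have hIoc : (Finset.Icc a b).filter (a < ·) = Finset.Ioc a b := by
    ext; simp only [Finset.mem_filter, Finset.mem_Icc, Finset.mem_Ioc]; omega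
  have hIco : (Finset.Icc a b).filter (· < b) = Finset.Ico a b := by
    ext; simp only [Finset.mem_filter, Finset.mem_Icc, Finset.mem_Ico]; omega
  rw [hIoc, hIco, Int.card_Ioc, Int.card_Ico]
  simp only [Nat.cast_id]
  omega

lemma IsArc.finite {C : Set (ℤ × ℤ)} (hC : IsArc C) : C.Finite := by
  obtain ⟨a, b, ⟨e⟩⟩ := hC
  let := khPlane
  let := khLine
  have := (Set.finite_Icc a b).to_subtype
  exact Set.finite_coe_iff.mp (Finite.of_equiv _ e.toEquiv.symm)

lemma mem_AdjSet_iff_of_homeomorph {C : Set (ℤ × ℤ)} {a b : ℤ}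
    (e : @Homeomorph C (Set.Icc a b) (induced Subtype.val khPlane) (induced Subtype.val khLine))
    (u v : C) : u.1 ∈ AdjSet v.1 ↔ |(e u : ℤ) - e v| = 1 := by
  let := khPlane
  let := khLine
  have spec (u v : C) : u.1 ⤳ v.1 ↔ (e u : ℤ) ⤳ e v := by
    rw [IsInducing.subtypeVal.specializes_iff, IsInducing.subtypeVal.specializes_iff,
      e.isInducing.specializes_iff]
  have hne : u.1 ≠ v.1 ↔ (e u : ℤ) ≠ e v := by
    simp only [ne_eq, ← Subtype.ext_iff, e.injective.eq_iff]
  rw [mem_AdjSet_iff, spec, spec, hne, khLine_specializes_or_iff]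
  simp only [Int.abs_eq_natAbs]
  omega

lemma IsArc.sum_ncard_AdjSet_inter {C : Set (ℤ × ℤ)} (hC : IsArc C) :
    ∑ z ∈ hC.finite.toFinset, (AdjSet z ∩ C).ncard = 2 * (C.ncard - 1) := by
  obtain ⟨a, b, ⟨e⟩⟩ := id hC
  let := khPlane
  let := khLine
  have deg (u : C) : (AdjSet u.1 ∩ C).ncard
      = ((Finset.Icc a b).filter (fun k => |k - (e u : ℤ)| = 1)).card := by
    rw [← Set.ncard_coe_finset]
    refine Set.ncard_congr (fun z hz => (e ⟨z, hz.2⟩ : ℤ)) ?_ ?_ ?_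
    · intro z hz
      simpa [(e ⟨z, hz.2⟩).2.1, (e ⟨z, hz.2⟩).2.2] using (mem_AdjSet_iff_of_homeomorph e ⟨z, hz.2⟩ u).mp hz.1
    · intro z w hz hw h
      simpa using e.injective (Subtype.ext h)
    · intro k hk
      simp only [Finset.coe_filter, Finset.mem_Icc, Set.mem_ofPred_eq] at hk
      refine ⟨e.symm ⟨k, hk.1⟩,
        ⟨(mem_AdjSet_iff_of_homeomorph e _ u).mpr (by simpa using hk.2), Subtype.mem _⟩, ?_⟩
      simp
  have hsum : ∑ z ∈ hC.finite.toFinset, (AdjSet z ∩ C).ncard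
      = ∑ k ∈ Finset.Icc a b, ((Finset.Icc a b).filter (fun j => |j - k| = 1)).card := by
    refine Finset.sum_bij' (fun z hz => (e ⟨z, by simpa using hz⟩ : ℤ))
      (fun k hk => (e.symm ⟨k, by simpa using hk⟩ : ℤ × ℤ)) ?_ ?_ ?_ ?_ ?_
    · intro z hz; exact Finset.mem_Icc.mpr (e _).2
    · intro k hk; simp
    · intro z hz; simp
    · intro k hk; simp
    · intro z hz; exact deg ⟨z, _⟩
  have hcard : C.ncard = (b + 1 - a).toNat := by
    rw [← Nat.card_coe_set_eq, Nat.card_congr e.toEquiv, Nat.card_coe_set_eq,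
      ← Finset.coe_Icc, Set.ncard_coe_finset, Int.card_Icc]
  rw [hsum, sum_card_filter_abs_sub_eq_one, hcard]
  omega

open Classical in
lemma ncard_AdjSet_inter_eq_add {J : Set (ℤ × ℤ)} (hJ : J.Finite) {x : ℤ × ℤ} (hx : x ∈ J)
    (z : ℤ × ℤ) :
    (AdjSet z ∩ J).ncard = (AdjSet z ∩ (J \ {x})).ncard + if x ∈ AdjSet z then 1 else 0 := by
  rw [← Set.inter_sdiff_assoc]
  split_ifs with hxz
  · exact (Set.ncard_sdiff_singleton_add_one (Set.mem_inter hxz hx) (hJ.inter_of_right _)).symm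
  · rw [Set.sdiff_singleton_eq_self (fun h => hxz h.1), add_zero]

namespace IsJordanCurve

variable {J : Set (ℤ × ℤ)} (hJ : IsJordanCurve J)
include hJ

lemma finite : J.Finite := by
  obtain ⟨x, hx⟩ := hJ.1.1
  exact Set.Finite.of_sdiff (hJ.2.2 x hx).finite (Set.finite_singleton x)

open Classical in
lemma sum_ncard_AdjSet_inter {x : ℤ × ℤ} (hx : x ∈ J) :
    ∑ z ∈ hJ.finite.toFinset, (AdjSet z ∩ J).ncard
      = 2 * (AdjSet x ∩ J).ncard + 2 * (J.ncard - 2) := by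
  have harc := hJ.2.2 x hx
  have herase : harc.finite.toFinset = hJ.finite.toFinset.erase x := by
    ext; simp [and_comm]
  have hback : ∑ z ∈ harc.finite.toFinset, (if x ∈ AdjSet z then 1 else 0)
      = (AdjSet x ∩ J).ncard := by
    rw [Finset.sum_boole, Nat.cast_id, ← Set.ncard_coe_finset]
    congr 1
    ext z
    simp only [Finset.coe_filter, Set.Finite.mem_toFinset, Set.mem_sdiff,
      Set.mem_singleton_iff, Set.mem_ofPred_eq, Set.mem_inter_iff, mem_AdjSet_comm (x := x)]
    exact ⟨fun h => ⟨h.2, h.1.1⟩,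
      fun h => ⟨⟨h.2, fun hzx => notMem_AdjSet_self x (hzx ▸ h.1)⟩, h.1⟩⟩
  rw [← Finset.add_sum_erase _ _ (hJ.finite.mem_toFinset.mpr hx), ← herase,
    Finset.sum_congr rfl fun z _ => ncard_AdjSet_inter_eq_add hJ.finite hx z,
    Finset.sum_add_distrib, harc.sum_ncard_AdjSet_inter, hback,
    Set.ncard_sdiff_singleton_of_mem hx]
  omega

lemma ncard_AdjSet_inter {x : ℤ × ℤ} (hx : x ∈ J) : (AdjSet x ∩ J).ncard = 2 := by
  have h4 : 4 ≤ J.ncard := by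
    have := hJ.2.1
    rw [← hJ.finite.cast_ncard_eq] at this
    exact_mod_cast this
  have hconst : ∀ z ∈ hJ.finite.toFinset, (AdjSet z ∩ J).ncard = (AdjSet x ∩ J).ncard := by
    intro z hz
    have := (hJ.sum_ncard_AdjSet_inter hx).symm.trans
      (hJ.sum_ncard_AdjSet_inter (hJ.finite.mem_toFinset.mp hz))
    omega
  have htotal := hJ.sum_ncard_AdjSet_inter hx
  rw [Finset.sum_congr rfl hconst, Finset.sum_const, smul_eq_mul,
    ← Set.ncard_eq_toFinset_card J hJ.finite] at htotal
  have : (J.ncard - 2) * (AdjSet x ∩ J).ncard = (J.ncard - 2) * 2 := by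
    rw [Nat.sub_mul]; omega
  exact Nat.eq_of_mul_eq_mul_left (by omega) this

lemma encard_AdjSet_inter {x : ℤ × ℤ} (hx : x ∈ J) : (AdjSet x ∩ J).encard = 2 := by
  rw [← (hJ.finite.inter_of_right _).cast_ncard_eq, hJ.ncard_AdjSet_inter hx]
  rfl

end IsJordanCurve

lemma Γmap_injective : Function.Injective Γmap := by
  intro p q h
  simp only [Γmap, Prod.mk.injEq] at h
  exact Prod.ext (by omega) (by omega)

lemma range_Γmap : Set.range Γmap = {z | IsPure z} := by
  ext z
  simp only [Set.mem_range, Set.mem_ofPred_eq, IsPure, Γmap]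
  refine ⟨?_, fun h => ⟨((z.1 - z.2) / 2, (z.1 + z.2) / 2), Prod.ext (by omega) (by omega)⟩⟩
  rintro ⟨p, rfl⟩
  omega

lemma Γmap_image_preimage (J : Set (ℤ × ℤ)) :
    Γmap '' (Γmap ⁻¹' J) = {z ∈ J | IsPure z} := by
  rw [Set.image_preimage_eq_inter_range, range_Γmap]
  rfl

lemma Γmap_mem_AdjSet_iff {p q : ℤ × ℤ} : Γmap q ∈ AdjSet (Γmap p) ↔ Adj4 p q := by
  have hp : IsPure (Γmap p) := range_Γmap.subset ⟨p, rfl⟩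
  rw [hp.mem_AdjSet_iff]
  simp only [Adj4, Γmap, ne_eq, Prod.ext_iff, Int.abs_eq_natAbs]
  omega

lemma image_nbrs4 (A : Set (ℤ × ℤ)) (p : ℤ × ℤ) :
    Γmap '' nbrs4 A p = Γmap '' A ∩ AdjSet (Γmap p) := by
  rw [← Set.image_inter_preimage]
  congr 1
  ext q
  simp [nbrs4, Γmap_mem_AdjSet_iff]

lemma image_nbrs4_preimage (J : Set (ℤ × ℤ)) (p : ℤ × ℤ) :
    Γmap '' nbrs4 (Γmap ⁻¹' J) p = AdjSet (Γmap p) ∩ J ∩ {y | IsPure y} := by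
  rw [image_nbrs4, Γmap_image_preimage]
  ext y
  simp only [Set.mem_inter_iff, Set.mem_ofPred_eq]
  tauto

lemma mem_ΓStar_iff_of_isMixed {A : Set (ℤ × ℤ)} {m : ℤ × ℤ} (hm : IsMixed m) :
    m ∈ ΓStar A ↔
      ((m.1 - 1, m.2) ∈ Γmap '' A ∧ (m.1 + 1, m.2) ∈ Γmap '' A) ∨
      ((m.1, m.2 - 1) ∈ Γmap '' A ∧ (m.1, m.2 + 1) ∈ Γmap '' A) := by
  have hmA : m ∉ Γmap '' A := fun h => hm (range_Γmap.subset (Set.image_subset_range _ _ h))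
  simp only [ΓStar, Set.mem_union, hmA, false_or, Set.mem_ofPred_eq, hm, true_and]
  rcases hm.minN_clPt with ⟨hN, hcl⟩ | ⟨hN, hcl⟩ <;>
    simp [hN, hcl, Set.insert_subset_iff, Prod.ext_iff, -Set.mem_image, or_comm]

def reflect (m c : ℤ × ℤ) : ℤ × ℤ := (2 * m.1 - c.1, 2 * m.2 - c.2)

def midPt (x z : ℤ × ℤ) : ℤ × ℤ := ((x.1 + z.1) / 2, (x.2 + z.2) / 2)

section ΓStarFixed

variable {J : Set (ℤ × ℤ)} (hstar : ΓStar (Γmap ⁻¹' J) = J)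
include hstar

lemma mem_iff_exists_reflect_mem_of_ΓStar_eq {m : ℤ × ℤ} (hm : IsMixed m) :
    m ∈ J ↔ ∃ c ∈ AdjSet m, c ∈ J ∧ reflect m c ∈ J := by
  have hpure : IsPure (m.1 - 1, m.2) ∧ IsPure (m.1 + 1, m.2) ∧ IsPure (m.1, m.2 - 1) ∧
      IsPure (m.1, m.2 + 1) := by
    unfold IsMixed IsPure at hm
    simp only [IsPure]; omega
  conv_lhs => rw [← hstar]
  rw [mem_ΓStar_iff_of_isMixed hm, Γmap_image_preimage, hm.AdjSet_eq]
  simp only [Set.mem_ofPred_eq, hpure, and_true, Set.mem_insert_iff, Set.mem_singleton_iff,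
    exists_eq_or_imp, exists_eq_left, reflect]
  ring_nf
  tauto

lemma mem_iff_reflect_mem_of_ΓStar_eq (hJ : J.Finite) {x y : ℤ × ℤ} (hx : x ∈ J)
    (hxp : IsPure x) (hdeg : (AdjSet x ∩ J).ncard ≤ 2) (hy : y ∈ AdjSet x) (hym : IsMixed y) :
    y ∈ J ↔ reflect y x ∈ J := by
  refine ⟨fun hyJ => ?_, fun hr => (mem_iff_exists_reflect_mem_of_ΓStar_eq hstar hym).mpr
    ⟨x, mem_AdjSet_comm.mp hy, hx, hr⟩⟩
  obtain ⟨c, hc, hcJ, hrJ⟩ := (mem_iff_exists_reflect_mem_of_ΓStar_eq hstar hym).mp hyJ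
  by_contra hxr
  have hcx : c ≠ x := fun h => hxr (h ▸ hrJ)
  have hcr : c ≠ reflect y x := fun h => hxr (h ▸ hcJ)
  have hxy := hym.mem_AdjSet_iff.mp (mem_AdjSet_comm.mp hy)
  rw [hym.mem_AdjSet_iff] at hc
  -- `c`, `reflect y c` and `y` would be three neighbours of `x` in `J`
  have := (Set.two_lt_ncard_iff (hJ.inter_of_right _)).mpr
    ⟨c, reflect y c, y, ⟨?_, hcJ⟩, ⟨?_, hrJ⟩, ⟨hy, hyJ⟩, ?_, ?_, ?_⟩
  · omega
  all_goals
    simp only [hxp.mem_AdjSet_iff, reflect, ne_eq, Prod.ext_iff, Int.abs_eq_natAbs]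
      at hc hxy hcx hcr ⊢
    omega

lemma image_midPt_nbrs8_sdiff_nbrs4 (hJ : J.Finite) {p : ℤ × ℤ} (hp : Γmap p ∈ J)
    (hdeg : (AdjSet (Γmap p) ∩ J).ncard ≤ 2) :
    (fun q => midPt (Γmap p) (Γmap q)) '' (nbrs8 (Γmap ⁻¹' J) p \ nbrs4 (Γmap ⁻¹' J) p)
      = (AdjSet (Γmap p) ∩ J) \ {y | IsPure y} := by
  have hpp : IsPure (Γmap p) := range_Γmap.subset ⟨p, rfl⟩
  ext y
  constructor
  · rintro ⟨q, ⟨⟨hqJ, hq8⟩, hq4⟩, rfl⟩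
    simp only [nbrs4, Set.mem_ofPred_eq, hqJ, true_and] at hq4
    simp only [Adj8, Adj4, ne_eq, Prod.ext_iff, Int.abs_eq_natAbs] at hq8 hq4
    have hadj : midPt (Γmap p) (Γmap q) ∈ AdjSet (Γmap p) := by
      rw [hpp.mem_AdjSet_iff]
      simp only [midPt, Γmap, ne_eq, Prod.ext_iff, Int.abs_eq_natAbs]
      omega
    have hmix : IsMixed (midPt (Γmap p) (Γmap q)) := by
      simp only [IsMixed, IsPure, midPt, Γmap]
      omega
    have hr : reflect (midPt (Γmap p) (Γmap q)) (Γmap p) = Γmap q := by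
      simp only [reflect, midPt, Γmap, Prod.ext_iff]
      omega
    refine ⟨⟨hadj, ?_⟩, hmix⟩
    rw [mem_iff_reflect_mem_of_ΓStar_eq hstar hJ hp hpp hdeg hadj hmix, hr]
    exact hqJ
  · rintro ⟨⟨hadj, hyJ⟩, hym : IsMixed y⟩
    have hrJ := (mem_iff_reflect_mem_of_ΓStar_eq hstar hJ hp hpp hdeg hadj hym).mp hyJ
    rw [hpp.mem_AdjSet_iff] at hadj
    obtain ⟨q, hq⟩ : reflect y (Γmap p) ∈ Set.range Γmap := by
      rw [range_Γmap]
      simp only [Set.mem_ofPred_eq, IsMixed, IsPure, reflect, Γmap, ne_eq, Prod.ext_iff,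
        Int.abs_eq_natAbs] at hadj hym ⊢
      omega
    refine ⟨q, ⟨⟨show Γmap q ∈ J from hq ▸ hrJ, ?_⟩, fun h => absurd h.2 ?_⟩, ?_⟩
    all_goals
      simp only [IsMixed, IsPure, reflect, Γmap, ne_eq, Prod.ext_iff, Int.abs_eq_natAbs]
        at hadj hym hq
    · simp only [Adj8, ne_eq, Prod.ext_iff, Int.abs_eq_natAbs]; omega
    · simp only [Adj4, ne_eq, Prod.ext_iff, Int.abs_eq_natAbs]; omega
    · simp only [midPt, Γmap, Prod.ext_iff]; omega

end ΓStarFixed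

lemma nbrs4_subset_nbrs8 (C : Set (ℤ × ℤ)) (p : ℤ × ℤ) : nbrs4 C p ⊆ nbrs8 C p := by
  rintro q ⟨hq, hne, h⟩
  have := abs_nonneg (p.1 - q.1)
  have := abs_nonneg (p.2 - q.2)
  exact ⟨hq, hne, by omega, by omega⟩

lemma injOn_midPt_diagonal (p : ℤ × ℤ) :
    Set.InjOn (fun q => midPt (Γmap p) (Γmap q)) {q | Adj8 p q ∧ ¬ Adj4 p q} := by
  rintro q ⟨hq8, hq4⟩ q' ⟨hq8', hq4'⟩ h
  simp only [midPt, Γmap, Adj8, Adj4, ne_eq, Prod.ext_iff, Int.abs_eq_natAbs] at *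
  omega

namespace IsJordanCurve

variable {J : Set (ℤ × ℤ)} (hJ : IsJordanCurve J)
include hJ

theorem is4ClosedCurve_preimage (hpure : ∀ p ∈ J, IsPure p) :
    Is4ClosedCurve (Γmap ⁻¹' J) := by
  refine ⟨hJ.finite.preimage Γmap_injective.injOn, fun p hp => ?_⟩
  have hall : AdjSet (Γmap p) ∩ J ∩ {y | IsPure y} = AdjSet (Γmap p) ∩ J :=
    Set.inter_eq_left.mpr fun y hy => hpure y hy.2
  rw [← Γmap_injective.injOn.encard_image, image_nbrs4_preimage, hall, hJ.encard_AdjSet_inter hp]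

theorem is8ClosedCurve_preimage (hstar : ΓStar (Γmap ⁻¹' J) = J) :
    Is8ClosedCurve (Γmap ⁻¹' J) := by
  refine ⟨hJ.finite.preimage Γmap_injective.injOn, fun p hp => ?_⟩
  have hdiag : Set.InjOn (fun q => midPt (Γmap p) (Γmap q))
      (nbrs8 (Γmap ⁻¹' J) p \ nbrs4 (Γmap ⁻¹' J) p) :=
    (injOn_midPt_diagonal p).mono fun q hq =>
      show Adj8 p q ∧ ¬ Adj4 p q from ⟨hq.1.2, fun h => hq.2 ⟨hq.1.1, h⟩⟩
  rw [← Set.encard_sdiff_add_encard_of_subset (nbrs4_subset_nbrs8 _ p), ← hdiag.encard_image,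
    image_midPt_nbrs8_sdiff_nbrs4 hstar hJ.finite hp (hJ.ncard_AdjSet_inter hp).le,
    ← Γmap_injective.injOn.encard_image (s := nbrs4 _ p), image_nbrs4_preimage,
    Set.encard_sdiff_add_encard_inter, hJ.encard_AdjSet_inter hp]

end IsJordanCurve

/-- For a Jordan curve J: (i) if J contains only pure points, then Γ⁻¹(J) is a
closed 4-curve; (ii) if Γ*(Γ⁻¹(J)) = J, then Γ⁻¹(J) is a closed 8-curve. -/
theorem preimage_of_jordan_curve (J : Set (ℤ × ℤ)) (hJ : IsJordanCurve J) :
    ((∀ p ∈ J, IsPure p) → Is4ClosedCurve (Γmap ⁻¹' J)) ∧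
      (ΓStar (Γmap ⁻¹' J) = J → Is8ClosedCurve (Γmap ⁻¹' J)) :=
  ⟨hJ.is4ClosedCurve_preimage, hJ.is8ClosedCurve_preimage⟩
end

section
/- Let C ⊆ ℤ² be a closed 8-curve with more than four points, let p ∈ C, and let q ∈ C be 8-adjacent but not 4-adjacent to p, say q = p + (ε, δ) with ε, δ ∈ {−1, 1}. Then the two points p + (ε, 0) and p + (0, δ) lie in different 4-components of ℤ² ∖ C. -/
open TopologicalSpace

/-! Let `z ∉ C` and count, modulo 2, the edges of `C` crossing the horizontal half-line that
starts at `z + (0, 1/2)` and runs to the right. At every point of a closed 8-curve exactly two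
edges of `C` meet, so this parity is unchanged when `z` moves to a 4-neighbour outside `C`, and
is therefore constant on 4-connected subsets of `ℤ² ∖ C`. For the two corners `p + (ε, 0)`,
`p + (0, δ)` of a diagonal edge `pq` the two half-lines differ by exactly the edge `pq`, so their
parities differ. -/

open Finset

instance : DecidableRel Adj8 := fun _ _ => inferInstanceAs (Decidable (_ ∧ _))

lemma adj8_iff {p q : ℤ × ℤ} :
    Adj8 p q ↔ (p.1 ≠ q.1 ∨ p.2 ≠ q.2) ∧
      p.1 ≤ q.1 + 1 ∧ q.1 ≤ p.1 + 1 ∧ p.2 ≤ q.2 + 1 ∧ q.2 ≤ p.2 + 1 := by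
  simp only [Adj8, ne_eq, Prod.ext_iff, abs_le]
  omega

lemma Adj4.cases {z w : ℤ × ℤ} (h : Adj4 z w) :
    (w.1 = z.1 + 1 ∧ w.2 = z.2) ∨ (z.1 = w.1 + 1 ∧ z.2 = w.2) ∨
      (w.1 = z.1 ∧ w.2 = z.2 + 1) ∨ (z.1 = w.1 ∧ z.2 = w.2 + 1) := by
  obtain ⟨-, h⟩ := h
  rcases abs_cases (z.1 - w.1) with ⟨h1, _⟩ | ⟨h1, _⟩ <;>
    rcases abs_cases (z.2 - w.2) with ⟨h2, _⟩ | ⟨h2, _⟩ <;> omega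

lemma Conn4.eq_of_forall_adj4 {T : Set (ℤ × ℤ)} (hT : Conn4 T) {β : Type*} {f : ℤ × ℤ → β}
    (hf : ∀ x ∈ T, ∀ y ∈ T, Adj4 x y → f x = f y) {a b : ℤ × ℤ} (ha : a ∈ T) (hb : b ∈ T) :
    f a = f b := by
  by_contra hab
  refine hT ⟨{x ∈ T | f x = f a}, {x ∈ T | f x ≠ f a}, ⟨a, ha, rfl⟩, ⟨b, hb, Ne.symm hab⟩,
    ?_, ?_, ?_⟩
  · ext x
    by_cases f x = f a <;> simp_all
  · ext x
    simp only [Set.mem_inter_iff, Set.mem_ofPred_eq, Set.mem_empty_iff_false, iff_false]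
    tauto
  · rintro x ⟨hx, hxa⟩ y ⟨hy, hya⟩ hxy
    exact hya ((hf x hx y hy hxy).symm.trans hxa)

lemma Finset.even_card_of_swap_mem {α β : Type*} [LinearOrder β] {s : Finset (α × α)}
    (f : α → β) (hs : ∀ e ∈ s, e.swap ∈ s) (hf : ∀ e ∈ s, f e.1 ≠ f e.2) : Even #s := by
  have hsplit := card_filter_add_card_filter_not (s := s) (fun e => f e.1 < f e.2)
  have hswap : #{e ∈ s | ¬ f e.1 < f e.2} = #{e ∈ s | f e.1 < f e.2} := by
    refine card_nbij' Prod.swap Prod.swap ?_ ?_ (fun _ _ => rfl) (fun _ _ => rfl) <;>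
      intro e he <;> simp only [coe_filter, Set.mem_ofPred_eq] at he ⊢ <;>
      exact ⟨hs e he.1, by have := hf e he.1; simp only [Prod.fst_swap, Prod.snd_swap]; order⟩
  exact ⟨#{e ∈ s | f e.1 < f e.2}, by omega⟩

section Crossings

variable (C : Finset (ℤ × ℤ))

def crossings (k t : ℤ) : Finset ((ℤ × ℤ) × (ℤ × ℤ)) :=
  {e ∈ C ×ˢ C | e.1.2 = k ∧ e.2.2 = k + 1 ∧ e.1.1 ≤ e.2.1 + 1 ∧ e.2.1 ≤ e.1.1 + 1 ∧
    t < e.1.1 + e.2.1}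

@[simp]
lemma mem_crossings {k t : ℤ} {e : (ℤ × ℤ) × (ℤ × ℤ)} :
    e ∈ crossings C k t ↔ e.1 ∈ C ∧ e.2 ∈ C ∧ e.1.2 = k ∧ e.2.2 = k + 1 ∧
      e.1.1 ≤ e.2.1 + 1 ∧ e.2.1 ≤ e.1.1 + 1 ∧ t < e.1.1 + e.2.1 := by
  simp [crossings, and_assoc]

/-- An edge from row `k` to row `k + 1` crosses the line `y = k + 1/2` at abscissa
`(e.1.1 + e.2.1) / 2`, so `crossings C z.2 (2 * z.1)` are the edges crossing the half-line
from `(z.1, z.2 + 1/2)` to the right. -/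
def crossingParity (z : ℤ × ℤ) : ℕ := #(crossings C z.2 (2 * z.1)) % 2

variable {C}

lemma crossings_eq_of_notMem {x k : ℤ} (h₀ : (x, k) ∉ C) (h₁ : (x + 1, k) ∉ C) :
    crossings C k (2 * x) = crossings C k (2 * (x + 1)) := by
  ext ⟨⟨a, k'⟩, b⟩
  simp only [mem_crossings]
  constructor
  · rintro ⟨ha, hb, rfl, hbk, h1, h2, ht⟩
    refine ⟨ha, hb, rfl, hbk, h1, h2, ?_⟩
    by_contra
    obtain rfl | rfl : a = x ∨ a = x + 1 := by omega
    exacts [h₀ ha, h₁ ha]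
  · rintro ⟨ha, hb, rfl, hbk, h1, h2, ht⟩
    exact ⟨ha, hb, rfl, hbk, h1, h2, by omega⟩

lemma card_crossings_eq_add_one_of_diagonal {x x' k : ℤ} (hx : x' = x + 1 ∨ x' = x - 1)
    (hu : (x, k) ∈ C) (hv : (x', k + 1) ∈ C) (h₁ : (x', k) ∉ C) (h₂ : (x, k + 1) ∉ C) :
    #(crossings C k (x + x' - 1)) = #(crossings C k (x + x' + 1)) + 1 := by
  have hinsert : crossings C k (x + x' - 1) =
      insert ((x, k), (x', k + 1)) (crossings C k (x + x' + 1)) := by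
    ext ⟨⟨a, k₁⟩, ⟨b, k₂⟩⟩
    simp only [mem_crossings, mem_insert, Prod.mk.injEq]
    constructor
    · rintro ⟨ha, hb, rfl, rfl, h1, h2, ht⟩
      have hax : a ≠ x' := by rintro rfl; exact h₁ ha
      have hbx : b ≠ x := by rintro rfl; exact h₂ hb
      by_cases hgt : x + x' + 1 < a + b
      · exact Or.inr ⟨ha, hb, rfl, rfl, h1, h2, hgt⟩
      · exact Or.inl ⟨⟨by omega, rfl⟩, by omega, rfl⟩
    · rintro (⟨⟨rfl, rfl⟩, rfl, rfl⟩ | ⟨ha, hb, rfl, rfl, h1, h2, ht⟩)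
      · exact ⟨hu, hv, rfl, rfl, by omega, by omega, by omega⟩
      · exact ⟨ha, hb, rfl, rfl, h1, h2, by omega⟩
  rw [hinsert, card_insert_of_notMem]
  simp only [mem_crossings]
  omega

lemma card_crossings_mod_two_eq_crossingParity (hdeg : ∀ v ∈ C, Even #{u ∈ C | Adj8 v u})
    {x k : ℤ} (hmid : (x, k + 1) ∉ C) :
    #(crossings C k (2 * x)) % 2 = crossingParity C (x, k + 1) := by
  -- Sum the degrees of the points of `C` in row `k + 1` right of `x`: edges inside that row
  -- are counted twice, those going down cross at height `k + 1/2`, those going up at `k + 3/2`.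
  set E := {e ∈ {v ∈ C | v.2 = k + 1 ∧ x < v.1} ×ˢ C | Adj8 e.1 e.2}
  have hE : Even #E := by
    rw [card_filter, sum_product]
    exact even_sum _ fun v hv => by rw [← card_filter]; exact hdeg v (mem_filter.1 hv).1
  have hx_ne : ∀ b ∈ C, b.2 = k + 1 → b.1 ≠ x := by
    rintro ⟨b, _⟩ hb rfl rfl; exact hmid hb
  have hrow : Even #{e ∈ E | e.2.2 = k + 1} := by
    refine even_card_of_swap_mem Prod.fst ?_ ?_ <;> rintro ⟨⟨a, k₁⟩, ⟨b, k₂⟩⟩ he <;>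
      simp only [E, mem_filter, mem_product, adj8_iff, Prod.swap_prod_mk] at he ⊢
    · have := hx_ne _ he.1.1.2 he.2
      grind
    · omega
  have hdown : #{e ∈ {e ∈ E | ¬ e.2.2 = k + 1} | e.2.2 = k} = #(crossings C k (2 * x)) := by
    refine card_nbij' Prod.swap Prod.swap ?_ ?_ (fun _ _ => rfl) (fun _ _ => rfl) <;>
      rintro ⟨⟨a, k₁⟩, ⟨b, k₂⟩⟩ he <;>
      simp only [E, coe_filter, mem_filter, mem_product, adj8_iff, Set.mem_ofPred_eq,
        mem_coe, mem_crossings, Prod.swap_prod_mk] at he ⊢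
    · grind
    · have := hx_ne _ he.2.1 he.2.2.2.1
      grind
  have hup : {e ∈ {e ∈ E | ¬ e.2.2 = k + 1} | ¬ e.2.2 = k} = crossings C (k + 1) (2 * x) := by
    ext ⟨⟨a, k₁⟩, ⟨b, k₂⟩⟩
    simp only [E, mem_filter, mem_product, adj8_iff, mem_crossings]
    have := hx_ne (a, k₁)
    grind
  have h₁ := card_filter_add_card_filter_not (s := E) (fun e => e.2.2 = k + 1)
  have h₂ :=
    card_filter_add_card_filter_not (s := {e ∈ E | ¬ e.2.2 = k + 1}) (fun e => e.2.2 = k)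
  rw [Nat.even_iff] at hE hrow
  rw [crossingParity, ← hup]
  omega

lemma crossingParity_eq_of_adj4 (hdeg : ∀ v ∈ C, Even #{u ∈ C | Adj8 v u}) {z w : ℤ × ℤ}
    (hz : z ∉ C) (hw : w ∉ C) (h : Adj4 z w) : crossingParity C z = crossingParity C w := by
  obtain ⟨x, k⟩ := z
  obtain ⟨x', k'⟩ := w
  have hcases := h.cases
  dsimp only at hcases
  rcases hcases with ⟨rfl, rfl⟩ | ⟨rfl, rfl⟩ | ⟨rfl, rfl⟩ | ⟨rfl, rfl⟩
  · dsimp only [crossingParity]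
    rw [crossings_eq_of_notMem hz hw]
  · dsimp only [crossingParity]
    rw [crossings_eq_of_notMem hw hz]
  · exact card_crossings_mod_two_eq_crossingParity hdeg hw
  · exact (card_crossings_mod_two_eq_crossingParity hdeg hz).symm

lemma crossingParity_ne_of_diagonal (hdeg : ∀ v ∈ C, Even #{u ∈ C | Adj8 v u})
    {u v : ℤ × ℤ} (hx : v.1 = u.1 + 1 ∨ v.1 = u.1 - 1) (hk : v.2 = u.2 + 1)
    (hu : u ∈ C) (hv : v ∈ C) (h₁ : (v.1, u.2) ∉ C) (h₂ : (u.1, v.2) ∉ C) :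
    crossingParity C (v.1, u.2) ≠ crossingParity C (u.1, v.2) := by
  obtain ⟨x, k⟩ := u
  obtain ⟨x', k'⟩ := v
  dsimp only at *
  subst hk
  have hcard := card_crossings_eq_add_one_of_diagonal hx hu hv h₁ h₂
  rw [← card_crossings_mod_two_eq_crossingParity hdeg h₂]
  dsimp only [crossingParity]
  rcases hx with rfl | rfl
  · rw [show x + (x + 1) - 1 = 2 * x by ring, show x + (x + 1) + 1 = 2 * (x + 1) by ring] at hcard
    omega
  · rw [show x + (x - 1) - 1 = 2 * (x - 1) by ring, show x + (x - 1) + 1 = 2 * x by ring] at hcard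
    omega

end Crossings

lemma Is8ClosedCurve.even_card_filter_adj8 {C : Finset (ℤ × ℤ)} (hC : Is8ClosedCurve ↑C) :
    ∀ v ∈ C, Even #{u ∈ C | Adj8 v u} := by
  intro v hv
  have h := hC.2 v hv
  rw [show nbrs8 C v = ↑{u ∈ C | Adj8 v u} by ext; simp [nbrs8],
    Set.encard_coe_eq_coe_finsetCard] at h
  exact ⟨1, by exact_mod_cast h⟩

theorem diagonal_neighbours_in_different_4components_general (C : Set (ℤ × ℤ))
    (p : ℤ × ℤ) (ε δ : ℤ) (hC : Is8ClosedCurve C)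
    (hp : p ∈ C) (hε : ε = -1 ∨ ε = 1) (hδ : δ = -1 ∨ δ = 1)
    (hq : (p.1 + ε, p.2 + δ) ∈ C) :
    ∀ T₁ T₂ : Set (ℤ × ℤ), Is4CompOf T₁ Cᶜ → Is4CompOf T₂ Cᶜ →
      (p.1 + ε, p.2) ∈ T₁ → (p.1, p.2 + δ) ∈ T₂ → T₁ ≠ T₂ := by
  rintro T₁ T₂ ⟨hT₁C, hT₁, -⟩ - ha hb rfl
  lift C to Finset (ℤ × ℤ) using hC.1
  have hdeg := hC.even_card_filter_adj8
  have hpar : crossingParity C (p.1 + ε, p.2) = crossingParity C (p.1, p.2 + δ) :=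
    hT₁.eq_of_forall_adj4 (fun x hx y hy hxy =>
      crossingParity_eq_of_adj4 hdeg (hT₁C hx) (hT₁C hy) hxy) ha hb
  rcases hδ with rfl | rfl
  · exact crossingParity_ne_of_diagonal hdeg (u := (p.1 + ε, p.2 + -1)) (v := p)
      (by omega) (by omega) hq hp (hT₁C hb) (hT₁C ha) hpar.symm
  · exact crossingParity_ne_of_diagonal hdeg (u := p) (v := (p.1 + ε, p.2 + 1))
      (by omega) rfl hp hq (hT₁C ha) (hT₁C hb) hpar

/-- For a closed 8-curve C with more than four points, p ∈ C, and q = p + (ε, δ) ∈ C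
8-adjacent but not 4-adjacent to p (ε, δ ∈ {−1,1}), the points p + (ε, 0) and
p + (0, δ) lie in different 4-components of ℤ² ∖ C. -/
theorem diagonal_neighbours_in_different_4components (C : Set (ℤ × ℤ))
    (p : ℤ × ℤ) (ε δ : ℤ) (hC : Is8ClosedCurve C) (hcard : 4 < C.encard)
    (hp : p ∈ C) (hε : ε = -1 ∨ ε = 1) (hδ : δ = -1 ∨ δ = 1)
    (hq : (p.1 + ε, p.2 + δ) ∈ C) :
    ∀ T₁ T₂ : Set (ℤ × ℤ), Is4CompOf T₁ Cᶜ → Is4CompOf T₂ Cᶜ →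
      (p.1 + ε, p.2) ∈ T₁ → (p.1, p.2 + δ) ∈ T₂ → T₁ ≠ T₂ :=
  diagonal_neighbours_in_different_4components_general C p ε δ hC hp hε hδ hq
end
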